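/- For every n ≥ 1 the following identity of real polynomials holds: x³ · Σ_{k=0}^{2n−1} (2^k/k!) · Hₖ″(0) · Hₖ(x) = (2·(−1)^{n−1}/(n−1)!) · (2x·H₂ₙ(x) + (1 − 2n·x²)·H₂ₙ₋₁(x)). Equivalently, the derivated Hermite kernel K₂ₙ₋₁^{(0,2)}(x,0) = Σ_{k=0}^{2n−1} Hₖ(x)Hₖ″(0)/‖Hₖ‖² equals (2·(−1)^{n−1}/(√π·(n−1)!)) · (2x·H₂ₙ(x) + (1 − 2n·x²)·H₂ₙ₋₁(x))/x³. -/

import Mathlib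

/-!
Since `Hₖ″ = k(k-1)·Hₖ₋₂`, and `Hₖ(0)` vanishes for odd `k` while
`H₂ₘ(0) = (-1)ᵐ(2m)!/(m!·4ᵐ)`, the coefficient `2ᵏ·Hₖ″(0)/k!` is `0` for odd `k` (and `k = 0`)
and `4(-1)ᵐ/m!` for `k = 2m+2`. Writing `Nₖ = 2X·Hₖ₊₁ + (1 - (k+1)X²)·Hₖ`, the three-term
recurrence gives `Nₖ₊₂ = -((k+1)/2)·(Nₖ + 2X³·Hₖ₊₁)`, which is exactly the induction step in `n`
(and `N₁ = 0` is the base case). Dividing by `√π·x³` gives the kernel form.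
-/

open Polynomial Finset

/-- The monic Hermite polynomials: `H₀ = 1`, `H₁ = X`,
`H_{n+2} = X·H_{n+1} − ((n+1)/2)·Hₙ`. -/
noncomputable def hermiteM : ℕ → Polynomial ℝ
  | 0 => 1
  | 1 => X
  | n + 2 => X * hermiteM (n + 1) - C (((n : ℝ) + 1) / 2) * hermiteM n

/-- The squared norm of the `n`-th monic Hermite polynomial: `√π · n! / 2ⁿ`. -/
noncomputable def hermiteNormSq (n : ℕ) : ℝ :=
  Real.sqrt Real.pi * n.factorial / 2 ^ n

lemma hermiteM_add_two (n : ℕ) :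
    hermiteM (n + 2) = X * hermiteM (n + 1) - C (((n : ℝ) + 1) / 2) * hermiteM n := rfl

lemma derivative_hermiteM_succ (n : ℕ) :
    derivative (hermiteM (n + 1)) = C ((n : ℝ) + 1) * hermiteM n := by
  induction n using Nat.twoStepInduction with
  | zero => simp [hermiteM]
  | one => simp [hermiteM]; ring
  | more n ih₁ ih₂ =>
    rw [hermiteM_add_two (n + 1), derivative_sub, derivative_mul, derivative_X,
      derivative_C_mul, ih₁, ih₂, hermiteM_add_two n]
    simp only [C_mul', smul_sub, one_mul, mul_smul_comm, Nat.cast_add, Nat.cast_one,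
      Nat.cast_ofNat]
    module

lemma derivative_derivative_hermiteM (n : ℕ) :
    derivative (derivative (hermiteM (n + 2))) =
      C (((n : ℝ) + 2) * ((n : ℝ) + 1)) * hermiteM n := by
  rw [derivative_hermiteM_succ, derivative_C_mul, derivative_hermiteM_succ, ← mul_assoc, ← C_mul]
  push_cast
  ring_nf

lemma hermiteM_eval_zero_odd (m : ℕ) : (hermiteM (2 * m + 1)).eval 0 = 0 := by
  induction m with
  | zero => simp [hermiteM]
  | succ m ih => rw [show 2 * (m + 1) + 1 = 2 * m + 1 + 2 by ring, hermiteM_add_two]; simp [ih]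

lemma hermiteM_eval_zero_even (m : ℕ) :
    (hermiteM (2 * m)).eval 0 = (-1) ^ m * (2 * m).factorial / (m.factorial * 4 ^ m) := by
  induction m with
  | zero => simp [hermiteM]
  | succ m ih =>
    rw [show 2 * (m + 1) = 2 * m + 2 by ring, hermiteM_add_two, Nat.factorial_succ,
      Nat.factorial_succ, Nat.factorial_succ]
    simp only [eval_sub, eval_mul, eval_X, eval_C, zero_mul, zero_sub, ih]
    push_cast
    field_simp
    ring

noncomputable def hermiteKernelCoeff (k : ℕ) : ℝ :=
  2 ^ k / k.factorial * (derivative (derivative (hermiteM k))).eval 0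

lemma hermiteKernelCoeff_zero : hermiteKernelCoeff 0 = 0 := by
  simp [hermiteKernelCoeff, hermiteM]

lemma hermiteKernelCoeff_odd (m : ℕ) : hermiteKernelCoeff (2 * m + 1) = 0 := by
  cases m with
  | zero => simp [hermiteKernelCoeff, hermiteM]
  | succ m =>
    rw [hermiteKernelCoeff, show 2 * (m + 1) + 1 = 2 * m + 1 + 2 by ring,
      derivative_derivative_hermiteM, eval_mul, hermiteM_eval_zero_odd, mul_zero, mul_zero]

lemma hermiteKernelCoeff_even_add_two (m : ℕ) :
    hermiteKernelCoeff (2 * m + 2) = 4 * (-1) ^ m / m.factorial := by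
  rw [hermiteKernelCoeff, derivative_derivative_hermiteM, eval_mul, eval_C,
    hermiteM_eval_zero_even, Nat.factorial_succ, Nat.factorial_succ, pow_add, pow_mul]
  push_cast
  field_simp
  ring

noncomputable def hermiteKernelNumerator (k : ℕ) : ℝ[X] :=
  2 * X * hermiteM (k + 1) + (1 - C ((k : ℝ) + 1) * X ^ 2) * hermiteM k

lemma hermiteKernelNumerator_one : hermiteKernelNumerator 1 = 0 := by
  refine Polynomial.funext fun x => ?_
  simp only [hermiteKernelNumerator, hermiteM, eval_add, eval_sub, eval_mul, eval_pow, eval_X,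
    eval_C, eval_one, eval_ofNat, eval_zero]
  ring

lemma hermiteKernelNumerator_add_two (k : ℕ) :
    hermiteKernelNumerator (k + 2) =
      -C (((k : ℝ) + 1) / 2) * (hermiteKernelNumerator k + 2 * X ^ 3 * hermiteM (k + 1)) := by
  refine Polynomial.funext fun x => ?_
  simp only [hermiteKernelNumerator, hermiteM_add_two (k + 1), hermiteM_add_two k, eval_add,
    eval_sub, eval_mul, eval_neg, eval_pow, eval_X, eval_C, eval_one, eval_ofNat]
  push_cast
  ring

lemma X_pow_three_mul_sum_hermiteKernelCoeff (m : ℕ) :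
    X ^ 3 * ∑ k ∈ range (2 * m + 2), C (hermiteKernelCoeff k) * hermiteM k =
      C (2 * (-1 : ℝ) ^ m / m.factorial) * hermiteKernelNumerator (2 * m + 1) := by
  induction m with
  | zero =>
    simp [sum_range_succ, hermiteKernelCoeff_zero, hermiteKernelCoeff_odd 0,
      hermiteKernelNumerator_one]
  | succ m ih =>
    rw [show 2 * (m + 1) + 2 = 2 * m + 2 + 1 + 1 by ring, sum_range_succ, sum_range_succ,
      mul_add, mul_add, ih, hermiteKernelCoeff_even_add_two,
      show 2 * m + 2 + 1 = 2 * (m + 1) + 1 by ring, hermiteKernelCoeff_odd,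
      show 2 * (m + 1) + 1 = 2 * m + 1 + 2 by ring, hermiteKernelNumerator_add_two,
      Nat.factorial_succ]
    refine Polynomial.funext fun x => ?_
    simp only [eval_add, eval_mul, eval_neg, eval_pow, eval_X, eval_C, eval_ofNat]
    push_cast
    field_simp
    ring

lemma div_hermiteNormSq (k : ℕ) (x : ℝ) :
    (hermiteM k).eval x * (derivative (derivative (hermiteM k))).eval 0 / hermiteNormSq k =
      hermiteKernelCoeff k * (hermiteM k).eval x / Real.sqrt Real.pi := by
  rw [hermiteKernelCoeff, hermiteNormSq]
  field_simp

theorem stmt16 (n : ℕ) (hn : 1 ≤ n) :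
    (X ^ 3 * ∑ k ∈ range (2 * n),
        C ((2 : ℝ) ^ k / k.factorial * (derivative (derivative (hermiteM k))).eval 0) *
          hermiteM k =
      C (2 * (-1 : ℝ) ^ (n - 1) / (n - 1).factorial) *
        (2 * X * hermiteM (2 * n) +
          (1 - C (2 * (n : ℝ)) * X ^ 2) * hermiteM (2 * n - 1))) ∧
    (∀ x : ℝ, x ≠ 0 →
      ∑ k ∈ range (2 * n),
          (hermiteM k).eval x * (derivative (derivative (hermiteM k))).eval 0 /
            hermiteNormSq k =
        2 * (-1 : ℝ) ^ (n - 1) / (Real.sqrt Real.pi * (n - 1).factorial) *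
          ((2 * x * (hermiteM (2 * n)).eval x +
            (1 - 2 * (n : ℝ) * x ^ 2) * (hermiteM (2 * n - 1)).eval x) / x ^ 3)) := by
  obtain ⟨m, rfl⟩ := Nat.exists_eq_add_of_le' hn
  have hcast : ((2 * m + 1 : ℕ) : ℝ) + 1 = 2 * ((m + 1 : ℕ) : ℝ) := by push_cast; ring
  have hpoly := X_pow_three_mul_sum_hermiteKernelCoeff m
  rw [hermiteKernelNumerator, hcast, show 2 * m + 1 + 1 = 2 * (m + 1) by ring,
    show 2 * m + 1 = 2 * (m + 1) - 1 by omega] at hpoly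
  simp only [Nat.add_sub_cancel]
  refine ⟨hpoly, fun x hx => ?_⟩
  have heval := congrArg (eval x) hpoly
  simp only [eval_mul, eval_add, eval_sub, eval_one, eval_X, eval_C, eval_pow, eval_ofNat,
    eval_finsetSum] at heval
  rw [sum_congr rfl fun k _ => div_hermiteNormSq k x, ← sum_div,
    eq_div_of_mul_eq (pow_ne_zero 3 hx) ((mul_comm _ _).trans heval)]
  field_simp
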